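/- arXiv:1112.1504 — 5 statements merged into one kernel-verified Lean document; each statement's English description precedes it below -/
import Mathlib

section
/- Let f : I → ℝ³ be a smooth unit speed space-like curve on S²₁ (⟨f,f⟩ = 1, ⟨f',f'⟩ = 1), with Sabban frame {f, t, s} and geodesic curvature κ_g(v) = det(f(v), t(v), t'(v)). Fix v ∈ I with κ_g(v)² > 1, fix u ∈ S²₁, and let h(w) = ⟨f(w), u⟩. Then h'(v) = 0 and h''(v) = 0 hold simultaneously if and only if u = ε·(κ_g(v)·f(v) + s(v))/√(κ_g(v)² − 1) for some ε ∈ {1, −1}. -/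
noncomputable section

open Real

/-- The Lorentzian (Minkowski) inner product on ℝ³: ⟨x,y⟩ = x₁y₁ + x₂y₂ − x₃y₃. -/
def mink (x y : Fin 3 → ℝ) : ℝ := x 0 * y 0 + x 1 * y 1 - x 2 * y 2

/-- The Lorentzian cross product on ℝ³:
x × y = (x₂y₃ − x₃y₂, x₃y₁ − x₁y₃, x₂y₁ − x₁y₂). -/
def mcross (x y : Fin 3 → ℝ) : Fin 3 → ℝ :=
  ![x 1 * y 2 - x 2 * y 1, x 2 * y 0 - x 0 * y 2, x 1 * y 0 - x 0 * y 1]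

/-- Determinant of three vectors in ℝ³ (as the rows of a 3×3 matrix). -/
def mdet (x y z : Fin 3 → ℝ) : ℝ := Matrix.det (Matrix.of ![x, y, z])

/-- The pseudo norm ‖x‖ = √|⟨x,x⟩|. -/
def mnorm (x : Fin 3 → ℝ) : ℝ := Real.sqrt |mink x x|

lemma mink_comm (x y : Fin 3 → ℝ) : mink x y = mink y x := by simp [mink]; ring

lemma mdet_expand (x y z : Fin 3 → ℝ) : mdet x y z =
    x 0 * (y 1 * z 2 - y 2 * z 1) - x 1 * (y 0 * z 2 - y 2 * z 0) + x 2 * (y 0 * z 1 - y 1 * z 0) := by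
  simp [mdet, Matrix.det_fin_three]; ring

lemma mink_mcross (x y z : Fin 3 → ℝ) : mink z (mcross x y) = mdet x y z := by
  simp [mink, mcross, mdet_expand]; ring

lemma mink_eq_of_inner (x y z u w : Fin 3 → ℝ) (hd : mdet x y z ≠ 0)
    (h1 : mink u x = mink w x) (h2 : mink u y = mink w y) (h3 : mink u z = mink w z) :
    u = w := by
  rw [mdet_expand] at hd
  simp only [mink] at h1 h2 h3
  funext i
  have k0 : (u 0 - w 0) * (x 0 * (y 1 * z 2 - y 2 * z 1) - x 1 * (y 0 * z 2 - y 2 * z 0) + x 2 * (y 0 * z 1 - y 1 * z 0)) = 0 := by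
    linear_combination (y 1 * z 2 - y 2 * z 1) * h1 - (x 1 * z 2 - x 2 * z 1) * h2 + (x 1 * y 2 - x 2 * y 1) * h3
  have k1 : (u 1 - w 1) * (x 0 * (y 1 * z 2 - y 2 * z 1) - x 1 * (y 0 * z 2 - y 2 * z 0) + x 2 * (y 0 * z 1 - y 1 * z 0)) = 0 := by
    linear_combination (-(y 0 * z 2 - y 2 * z 0)) * h1 + (x 0 * z 2 - x 2 * z 0) * h2 - (x 0 * y 2 - x 2 * y 0) * h3
  have k2 : (u 2 - w 2) * (x 0 * (y 1 * z 2 - y 2 * z 1) - x 1 * (y 0 * z 2 - y 2 * z 0) + x 2 * (y 0 * z 1 - y 1 * z 0)) = 0 := by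
    linear_combination (-(y 0 * z 1 - y 1 * z 0)) * h1 + (x 0 * z 1 - x 1 * z 0) * h2 - (x 0 * y 1 - x 1 * y 0) * h3
  fin_cases i
  · exact sub_eq_zero.mp ((mul_eq_zero.mp k0).resolve_right hd)
  · exact sub_eq_zero.mp ((mul_eq_zero.mp k1).resolve_right hd)
  · exact sub_eq_zero.mp ((mul_eq_zero.mp k2).resolve_right hd)

lemma hasDerivAt_mink {g k : ℝ → Fin 3 → ℝ} {g' k' : Fin 3 → ℝ} {w : ℝ}
    (hg : HasDerivAt g g' w) (hk : HasDerivAt k k' w) :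
    HasDerivAt (fun x => mink (g x) (k x)) (mink g' (k w) + mink (g w) k') w := by
  have h0 := (hasDerivAt_pi.mp hg 0).mul (hasDerivAt_pi.mp hk 0)
  have h1 := (hasDerivAt_pi.mp hg 1).mul (hasDerivAt_pi.mp hk 1)
  have h2 := (hasDerivAt_pi.mp hg 2).mul (hasDerivAt_pi.mp hk 2)
  have H := (h0.add h1).sub h2
  have e : mink g' (k w) + mink (g w) k' =
      g' 0 * k w 0 + g w 0 * k' 0 + (g' 1 * k w 1 + g w 1 * k' 1) - (g' 2 * k w 2 + g w 2 * k' 2) := by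
    simp [mink]; ring
  rw [e]; exact H

lemma hasDerivAt_mink_const {g : ℝ → Fin 3 → ℝ} {g' : Fin 3 → ℝ} {w : ℝ}
    (hg : HasDerivAt g g' w) (u : Fin 3 → ℝ) :
    HasDerivAt (fun x => mink (g x) u) (mink g' u) w := by
  have H := hasDerivAt_mink hg (hasDerivAt_const w u)
  have e : mink g' u = mink g' u + mink (g w) (0 : Fin 3 → ℝ) := by simp [mink]
  rw [e]; exact H

lemma mink_comb (α β : ℝ) (x y z : Fin 3 → ℝ) :
    mink (α • x + β • y) z = α * mink x z + β * mink y z := by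
  simp [mink]; ring

lemma mink_comb_right (α β : ℝ) (x y z : Fin 3 → ℝ) :
    mink z (α • x + β • y) = α * mink z x + β * mink z y := by
  simp [mink]; ring


/-- for the space-like height function h(w) = ⟨f(w), u⟩ of a unit speed
space-like curve f on S²₁, u ∈ S²₁ and v with κ_g(v)² > 1, one has
h'(v) = h''(v) = 0 iff u = ±(κ_g(v)·f(v) + s(v))/√(κ_g(v)² − 1). -/
theorem deSitter_height_function_second_derivative
    (a b : ℝ) (I : Set ℝ) (hI : I = Set.Ioo a b)
    (f : ℝ → Fin 3 → ℝ) (hf : ContDiff ℝ (⊤ : ℕ∞) f)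
    (hf1 : ∀ v ∈ I, mink (f v) (f v) = 1)
    (hf2 : ∀ v ∈ I, mink (deriv f v) (deriv f v) = 1)
    (t : ℝ → Fin 3 → ℝ) (ht : ∀ v, t v = deriv f v)
    (s : ℝ → Fin 3 → ℝ) (hs : ∀ v, s v = mcross (f v) (t v))
    (κg : ℝ → ℝ) (hκg : ∀ v, κg v = mdet (f v) (t v) (deriv t v))
    (v : ℝ) (hv : v ∈ I) (hκv : κg v ^ 2 > 1)
    (u : Fin 3 → ℝ) (hu : mink u u = 1)
    (h : ℝ → ℝ) (hh : ∀ w, h w = mink (f w) u) :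
    (deriv h v = 0 ∧ deriv (deriv h) v = 0) ↔
      ∃ ε : ℝ, (ε = 1 ∨ ε = -1) ∧
        u = (ε / Real.sqrt (κg v ^ 2 - 1)) • (κg v • f v + s v) := by
  subst hI
  have ht' : t = deriv f := funext ht
  subst ht'
  have hs' : s = fun w => mcross (f w) (deriv f w) := funext hs
  subst hs'
  have hh' : h = fun w => mink (f w) u := funext hh
  subst hh'
  -- differentiability
  have hfd : Differentiable ℝ f := hf.differentiable (by simp)
  have hfc : ContDiff ℝ ((⊤ : ℕ∞) : WithTop ℕ∞) f := hf.of_le (by simp)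
  have hfd2 : Differentiable ℝ (deriv f) := (contDiff_infty_iff_deriv.mp hfc).2.differentiable (by simp)
  have Hf : ∀ w, HasDerivAt f (deriv f w) w := fun w => (hfd w).hasDerivAt
  have Hf' : ∀ w, HasDerivAt (deriv f) (deriv (deriv f) w) w := fun w => (hfd2 w).hasDerivAt
  -- first and second derivative of h
  have hD1 : deriv (fun w => mink (f w) u) = fun w => mink (deriv f w) u :=
    funext fun w => (hasDerivAt_mink_const (Hf w) u).deriv
  have hD2 : deriv (deriv (fun w => mink (f w) u)) v = mink (deriv (deriv f) v) u := by
    rw [hD1]; exact (hasDerivAt_mink_const (Hf' v) u).deriv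
  have hD1v : deriv (fun w => mink (f w) u) v = mink (deriv f v) u := by rw [hD1]
  -- geometric scalar identities
  have e1 : ∀ w ∈ Set.Ioo a b, mink (f w) (deriv f w) = 0 := by
    intro w hw
    have hev : (fun x => mink (f x) (f x)) =ᶠ[nhds w] fun _ => (1 : ℝ) := by
      filter_upwards [isOpen_Ioo.mem_nhds hw] with x hx using hf1 x hx
    have hder := (hasDerivAt_mink (Hf w) (Hf w)).deriv
    rw [hev.deriv_eq, deriv_const] at hder
    have := mink_comm (deriv f w) (f w)
    linarith [hder, this]
  have eTA : mink (deriv f v) (deriv (deriv f) v) = 0 := by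
    have hev : (fun x => mink (deriv f x) (deriv f x)) =ᶠ[nhds v] fun _ => (1 : ℝ) := by
      filter_upwards [isOpen_Ioo.mem_nhds hv] with x hx using hf2 x hx
    have hder := (hasDerivAt_mink (Hf' v) (Hf' v)).deriv
    rw [hev.deriv_eq, deriv_const] at hder
    have := mink_comm (deriv (deriv f) v) (deriv f v)
    linarith [hder, this]
  have eFA : mink (f v) (deriv (deriv f) v) = -1 := by
    have hev : (fun x => mink (f x) (deriv f x)) =ᶠ[nhds v] fun _ => (0 : ℝ) := by
      filter_upwards [isOpen_Ioo.mem_nhds hv] with x hx using e1 x hx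
    have hder := (hasDerivAt_mink (Hf v) (Hf' v)).deriv
    rw [hev.deriv_eq, deriv_const] at hder
    have h2 := hf2 v hv
    have := mink_comm (deriv f v) (f v)
    linarith [hder]
  set F := f v with hF
  set T := deriv f v with hT
  set A := deriv (deriv f) v with hA0
  set S := mcross F T with hS
  set κ := κg v with hκ0
  have hFF : mink F F = 1 := hf1 v hv
  have hTT : mink T T = 1 := hf2 v hv
  have hFT : mink F T = 0 := e1 v hv
  have hκ : κ = mdet F T A := hκg v
  have hSS : mink S S = -1 := by
    have : mink S S = mink F T ^ 2 - mink F F * mink T T := by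
      simp [hS, mink, mcross]; ring
    rw [this, hFF, hTT, hFT]; ring
  have hFS : mink F S = 0 := by
    rw [hS, mink_mcross, mdet_expand]; ring
  have hTS : mink T S = 0 := by
    rw [hS, mink_mcross, mdet_expand]; ring
  have hAS : mink A S = κ := by rw [hS, mink_mcross, hκ]
  have hd : mdet F T S ≠ 0 := by
    rw [← mink_mcross, ← hS, hSS]; norm_num
  -- r := sqrt(κ² - 1)
  have hκ1 : κ ^ 2 - 1 > 0 := by linarith
  set r := Real.sqrt (κ ^ 2 - 1) with hr0
  have hr : r ^ 2 = κ ^ 2 - 1 := Real.sq_sqrt (le_of_lt hκ1)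
  have hrpos : r > 0 := Real.sqrt_pos.mpr hκ1
  have hrne : r ≠ 0 := ne_of_gt hrpos
  have hTF : mink T F = 0 := by rw [mink_comm]; exact hFT
  have hSF : mink S F = 0 := by rw [mink_comm]; exact hFS
  have hST : mink S T = 0 := by rw [mink_comm]; exact hTS
  have hAF : mink A F = -1 := by rw [mink_comm]; exact eFA
  have hAT : mink A T = 0 := by rw [mink_comm]; exact eTA
  -- decomposition of A:  A = -F - κ S
  have hAdec : A = (-1 : ℝ) • F + (-κ) • S := by
    apply mink_eq_of_inner F T S A _ hd
    · rw [mink_comb, hAF, hFF, hSF]; ring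
    · rw [mink_comb, hAT, hFT, hST]; ring
    · rw [mink_comb, hAS, hFS, hSS]; ring
  rw [hD1v, hD2]
  constructor
  · rintro ⟨h1, h2⟩
    have hTu : mink u T = 0 := by rw [mink_comm]; exact h1
    have hAu : mink u A = 0 := by rw [mink_comm]; exact h2
    have hAu' : mink u A = -1 * mink u F + (-κ) * mink u S := by
      rw [hAdec, mink_comb_right]
    have ha : mink u F = κ * (-(mink u S)) := by
      rw [hAu] at hAu'; linarith
    set c : ℝ := -(mink u S) with hc
    have hcomb : c • (κ • F + S) = (c * κ) • F + c • S := by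
      rw [smul_add, smul_smul]
    have huw : u = c • (κ • F + S) := by
      apply mink_eq_of_inner F T S u _ hd
      · rw [hcomb, mink_comb, hFF, hSF, ha]; ring
      · rw [hcomb, mink_comb, hFT, hST, hTu]; ring
      · rw [hcomb, mink_comb, hFS, hSS, hc]; ring
    have hww : mink (c • (κ • F + S)) (c • (κ • F + S)) = c ^ 2 * (κ ^ 2 - 1) := by
      rw [hcomb, mink_comb, mink_comb_right, mink_comb_right, hFF, hFS, hSF, hSS]; ring
    have hc2 : c ^ 2 * (κ ^ 2 - 1) = 1 := by
      rw [← hww, ← huw]; exact hu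
    refine ⟨c * r, ?_, ?_⟩
    · have hcr : (c * r) ^ 2 = 1 := by
        rw [mul_pow, hr]; linarith [hc2]
      have h' : (c * r - 1) * (c * r + 1) = 0 := by linear_combination hcr
      rcases mul_eq_zero.mp h' with h'' | h''
      · left; linarith
      · right; linarith
    · rw [huw]
      congr 1
      field_simp
  · rintro ⟨ε, hε, hueq⟩
    subst hueq
    have hsmul : (ε / r) • (κ • F + S) = (ε / r * κ) • F + (ε / r) • S := by
      rw [smul_add, smul_smul]
    rw [hsmul]
    constructor
    · rw [mink_comb_right, hTF, hTS]; ring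
    · rw [mink_comb_right, hAF, hAS]; ring
end
end

section
/- Let f : I → ℝ³ be a smooth unit speed space-like curve on S²₁ (⟨f,f⟩ = 1, ⟨f',f'⟩ = 1), with Sabban frame {f, t, s} and geodesic curvature κ_g, and assume κ_g(v)² > 1 for all v ∈ I. Then κ_g'(v) = 0 for all v ∈ I if and only if the map P(v) = (κ_g(v)·f(v) + s(v))/√(κ_g(v)² − 1) is constant on I. Moreover, in that case P takes a constant value u₀ ∈ S²₁ and there is a constant r ∈ ℝ (namely r = κ_g/√(κ_g² − 1)) with ⟨f(v), u₀⟩ = r for all v ∈ I; that is, f is contained in the pseudo-circle PS¹(u₀, r) = {u ∈ S²₁ : ⟨u, u₀⟩ = r}. -/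
noncomputable section

open Real

/-- The pseudo-circle with center u₀ on S²₁: PS¹(u₀, r) = {u ∈ S²₁ : ⟨u, u₀⟩ = r}. -/
def PS1 (u₀ : Fin 3 → ℝ) (r : ℝ) : Set (Fin 3 → ℝ) :=
  {u | mink u u = 1 ∧ mink u u₀ = r}

lemma mink_self_mcross (x y : Fin 3 → ℝ) : mink x (mcross x y) = 0 := by
  simp only [mink, mcross, Matrix.cons_val_zero, Matrix.cons_val_one, Matrix.head_cons,
    Matrix.cons_val_two, Matrix.tail_cons]; ring

lemma mink_snd_mcross (x y : Fin 3 → ℝ) : mink y (mcross x y) = 0 := by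
  simp only [mink, mcross, Matrix.cons_val_zero, Matrix.cons_val_one, Matrix.head_cons,
    Matrix.cons_val_two, Matrix.tail_cons]; ring

lemma mink_mcross_mcross (x y : Fin 3 → ℝ) :
    mink (mcross x y) (mcross x y) = (mink x y)^2 - mink x x * mink y y := by
  simp only [mink, mcross, Matrix.cons_val_zero, Matrix.cons_val_one, Matrix.head_cons,
    Matrix.cons_val_two, Matrix.tail_cons]; ring

lemma mink_smul_add (k m : ℝ) (u w d : Fin 3 → ℝ) :
    mink u (k • (m • w + d)) = k * (m * mink u w + mink u d) := by
  simp only [mink, Pi.smul_apply, Pi.add_apply, smul_eq_mul]; ring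

lemma mink_smul_add_self (k m : ℝ) (w d : Fin 3 → ℝ) :
    mink (k • (m • w + d)) (k • (m • w + d)) =
      k^2 * (m^2 * mink w w + 2*m*mink w d + mink d d) := by
  simp only [mink, Pi.smul_apply, Pi.add_apply, smul_eq_mul]; ring

lemma keyA (x y z : Fin 3 → ℝ) (h1 : mink x x = 1) (h2 : mink x y = 0)
    (h3 : mink y y = 1) (h4 : mink x z = -1) (h5 : mink y z = 0) (i : Fin 3) :
    mcross x z i = -(mdet x y z) * y i := by
  rw [mdet_expand]
  simp only [mink] at h1 h2 h3 h4 h5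
  fin_cases i <;>
    simp only [Fin.zero_eta, Fin.mk_one, Fin.reduceFinMk, mcross, Matrix.cons_val_zero,
      Matrix.cons_val_one, Matrix.head_cons, Matrix.cons_val_two, Matrix.tail_cons]
  · linear_combination
      ((-1) * x 2 * y 2 ^ 2 * z 1 + x 2 * y 1 * y 2 * z 2 + x 1 * y 1 * y 2 * z 1 + (-1) * x 1 * y 1 ^ 2 * z 2 + x 0 * y 0 * y 2 * z 1 + (-1) * x 0 * y 0 * y 1 * z 2) * h1 +
      (x 2 ^ 2 * y 2 * z 1 + (-1) * x 2 ^ 2 * y 1 * z 2 + (-1) * x 1 ^ 2 * y 2 * z 1 + x 1 ^ 2 * y 1 * z 2 + (-1) * x 0 ^ 2 * y 2 * z 1 + x 0 ^ 2 * y 1 * z 2) * h2 +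
      (x 2 * z 1 + (-1) * x 1 * z 2) * h3 +
      ((-1) * x 2 * y 1 + x 1 * y 2) * h5
  · linear_combination
      (x 2 * y 2 ^ 2 * z 0 + (-1) * x 2 * y 0 * y 2 * z 2 + (-1) * x 1 * y 1 * y 2 * z 0 + x 1 * y 0 * y 1 * z 2 + (-1) * x 0 * y 0 * y 2 * z 0 + x 0 * y 0 ^ 2 * z 2) * h1 +
      ((-1) * x 2 ^ 2 * y 2 * z 0 + x 2 ^ 2 * y 0 * z 2 + x 1 ^ 2 * y 2 * z 0 + (-1) * x 1 ^ 2 * y 0 * z 2 + x 0 ^ 2 * y 2 * z 0 + (-1) * x 0 ^ 2 * y 0 * z 2) * h2 +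
      ((-1) * x 2 * z 0 + x 0 * z 2) * h3 +
      (x 2 * y 0 + (-1) * x 0 * y 2) * h5
  · linear_combination
      (x 2 * y 1 * y 2 * z 0 + (-1) * x 2 * y 0 * y 2 * z 1 + (-1) * x 1 * y 1 ^ 2 * z 0 + x 1 * y 0 * y 1 * z 1 + (-1) * x 0 * y 0 * y 1 * z 0 + x 0 * y 0 ^ 2 * z 1) * h1 +
      ((-1) * x 2 ^ 2 * y 1 * z 0 + x 2 ^ 2 * y 0 * z 1 + x 1 ^ 2 * y 1 * z 0 + (-1) * x 1 ^ 2 * y 0 * z 1 + x 0 ^ 2 * y 1 * z 0 + (-1) * x 0 ^ 2 * y 0 * z 1) * h2 +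
      ((-1) * x 1 * z 0 + x 0 * z 1) * h3 +
      (x 1 * y 0 + (-1) * x 0 * y 1) * h5

lemma constOn {a b : ℝ} (g : ℝ → ℝ) (hg : Differentiable ℝ g)
    (h0 : ∀ v ∈ Set.Ioo a b, deriv g v = 0) :
    ∀ v ∈ Set.Ioo a b, ∀ w ∈ Set.Ioo a b, g v = g w := by
  have key : ∀ v ∈ Set.Ioo a b, ∀ w ∈ Set.Ioo a b, v < w → g v = g w := by
    intro v hv w hw hvw
    obtain ⟨c, hc, hcd⟩ := exists_deriv_eq_slope g hvw hg.continuous.continuousOn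
      hg.differentiableOn
    have hcI : c ∈ Set.Ioo a b := ⟨lt_trans hv.1 hc.1, lt_trans hc.2 hw.2⟩
    rw [h0 c hcI] at hcd
    have hne : w - v ≠ 0 := sub_ne_zero.mpr (ne_of_gt hvw)
    have h' := hcd.symm
    rw [div_eq_iff hne] at h'
    linarith
  intro v hv w hw
  rcases lt_trichotomy v w with h | h | h
  · exact key v hv w hw h
  · rw [h]
  · exact (key w hw v hv h).symm

/-- κ_g' ≡ 0 on I iff P(v) = (κ_g(v)·f(v) + s(v))/√(κ_g(v)² − 1) is constant
on I; and in that case P ≡ u₀ ∈ S²₁ and f lies in the pseudo-circle PS¹(u₀, r)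
with r = κ_g/√(κ_g² − 1). -/
theorem deSitter_pseudo_circle_characterization
    (a b : ℝ) (I : Set ℝ) (hI : I = Set.Ioo a b)
    (f : ℝ → Fin 3 → ℝ) (hf : ContDiff ℝ (⊤ : ℕ∞) f)
    (hf1 : ∀ v ∈ I, mink (f v) (f v) = 1)
    (hf2 : ∀ v ∈ I, mink (deriv f v) (deriv f v) = 1)
    (t : ℝ → Fin 3 → ℝ) (ht : ∀ v, t v = deriv f v)
    (s : ℝ → Fin 3 → ℝ) (hs : ∀ v, s v = mcross (f v) (t v))
    (κg : ℝ → ℝ) (hκg : ∀ v, κg v = mdet (f v) (t v) (deriv t v))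
    (hκ : ∀ v ∈ I, κg v ^ 2 > 1)
    (P : ℝ → Fin 3 → ℝ)
    (hP : ∀ v, P v = (Real.sqrt (κg v ^ 2 - 1))⁻¹ • (κg v • f v + s v)) :
    ((∀ v ∈ I, deriv κg v = 0) ↔ (∃ c, ∀ v ∈ I, P v = c)) ∧
    ((∀ v ∈ I, deriv κg v = 0) →
      ∃ u₀ r, mink u₀ u₀ = 1 ∧
        ∀ v ∈ I, P v = u₀ ∧ r = κg v / Real.sqrt (κg v ^ 2 - 1) ∧
          f v ∈ PS1 u₀ r) := by
  subst hI
  -- handle the empty case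
  rcases Set.eq_empty_or_nonempty (Set.Ioo a b) with hE | ⟨v₀, hv₀⟩
  · rw [hE] at *
    refine ⟨⟨fun _ => ⟨0, fun v hv => absurd hv (Set.notMem_empty v)⟩,
      fun _ v hv => absurd hv (Set.notMem_empty v)⟩, fun _ => ⟨![1,0,0], 0, ?_,
      fun v hv => absurd hv (Set.notMem_empty v)⟩⟩
    simp [mink]
  -- smoothness bookkeeping
  have hfd : Differentiable ℝ f := hf.differentiable (by simp)
  set d1 := deriv f with hd1
  have hfi : ContDiff ℝ ((⊤ : ℕ∞) : WithTop ℕ∞) f := hf.of_le (by simp)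
  have h1i : ContDiff ℝ ((⊤ : ℕ∞) : WithTop ℕ∞) d1 := (contDiff_infty_iff_deriv.mp hfi).2
  have h1d : Differentiable ℝ d1 := (contDiff_infty_iff_deriv.mp h1i).1
  set d2 := deriv d1 with hd2
  have h2i : ContDiff ℝ ((⊤ : ℕ∞) : WithTop ℕ∞) d2 := (contDiff_infty_iff_deriv.mp h1i).2
  have h2d : Differentiable ℝ d2 := (contDiff_infty_iff_deriv.mp h2i).1
  have Df : ∀ (v : ℝ) (i : Fin 3), HasDerivAt (fun w => f w i) (d1 v i) v :=
    fun v i => hasDerivAt_pi.mp (hfd v).hasDerivAt i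
  have Df1 : ∀ (v : ℝ) (i : Fin 3), HasDerivAt (fun w => d1 w i) (d2 v i) v :=
    fun v i => hasDerivAt_pi.mp (h1d v).hasDerivAt i
  have Df2 : ∀ (v : ℝ) (i : Fin 3), HasDerivAt (fun w => d2 w i) (deriv d2 v i) v :=
    fun v i => hasDerivAt_pi.mp (h2d v).hasDerivAt i
  -- rewrite t, s, κg
  have htd : t = d1 := funext ht
  have hκe : ∀ v, κg v = mdet (f v) (d1 v) (d2 v) := by
    intro v; rw [hκg v, htd, ← hd2]
  have hse : ∀ v, s v = mcross (f v) (d1 v) := by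
    intro v; rw [hs v, htd]
  -- derivative of mink pairing
  have minkD : ∀ (F G : ℝ → Fin 3 → ℝ) (F' G' : Fin 3 → ℝ) (v : ℝ),
      (∀ i, HasDerivAt (fun w => F w i) (F' i) v) →
      (∀ i, HasDerivAt (fun w => G w i) (G' i) v) →
      HasDerivAt (fun w => mink (F w) (G w)) (mink F' (G v) + mink (F v) G') v := by
    intro F G F' G' v hF hG
    have h := (((hF 0).mul (hG 0)).add ((hF 1).mul (hG 1))).sub ((hF 2).mul (hG 2))
    simp only [mink]
    exact h.congr_deriv (by ring)
  -- locally-constant functions have zero derivative on the open interval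
  have evd : ∀ (g : ℝ → ℝ) (c : ℝ) (v : ℝ), v ∈ Set.Ioo a b →
      (∀ w ∈ Set.Ioo a b, g w = c) → deriv g v = 0 := by
    intro g c v hv hgc
    have he : g =ᶠ[nhds v] fun _ => c :=
      Filter.eventuallyEq_of_mem (isOpen_Ioo.mem_nhds hv) hgc
    rw [he.deriv_eq, deriv_const]
  -- orthogonality relations
  have o1 : ∀ v ∈ Set.Ioo a b, mink (f v) (d1 v) = 0 := by
    intro v hv
    have hD := minkD f f (d1 v) (d1 v) v (Df v) (Df v)
    have h0 : mink (d1 v) (f v) + mink (f v) (d1 v) = 0 := by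
      rw [← hD.deriv]; exact evd _ 1 v hv hf1
    rw [mink_comm (d1 v)] at h0
    linarith
  have o2 : ∀ v ∈ Set.Ioo a b, mink (d1 v) (d2 v) = 0 := by
    intro v hv
    have hD := minkD d1 d1 (d2 v) (d2 v) v (Df1 v) (Df1 v)
    have h0 : mink (d2 v) (d1 v) + mink (d1 v) (d2 v) = 0 := by
      rw [← hD.deriv]; exact evd _ 1 v hv hf2
    rw [mink_comm (d2 v)] at h0
    linarith
  have o3 : ∀ v ∈ Set.Ioo a b, mink (f v) (d2 v) = -1 := by
    intro v hv
    have hD := minkD f d1 (d1 v) (d2 v) v (Df v) (Df1 v)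
    have h0 : mink (d1 v) (d1 v) + mink (f v) (d2 v) = 0 := by
      rw [← hD.deriv]; exact evd _ 0 v hv o1
    rw [hf2 v hv] at h0
    linarith
  -- κg is differentiable
  have hκdiff : Differentiable ℝ κg := by
    have hrw : κg = fun v => f v 0 * (d1 v 1 * d2 v 2 - d1 v 2 * d2 v 1)
        - f v 1 * (d1 v 0 * d2 v 2 - d1 v 2 * d2 v 0)
        + f v 2 * (d1 v 0 * d2 v 1 - d1 v 1 * d2 v 0) := by
      funext v; rw [hκe v, mdet_expand]
    have A : ∀ i : Fin 3, Differentiable ℝ (fun v => f v i) :=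
      fun i v => (Df v i).differentiableAt
    have B : ∀ i : Fin 3, Differentiable ℝ (fun v => d1 v i) :=
      fun i v => (Df1 v i).differentiableAt
    have C : ∀ i : Fin 3, Differentiable ℝ (fun v => d2 v i) :=
      fun i v => (Df2 v i).differentiableAt
    rw [hrw]
    exact (((A 0).mul (((B 1).mul (C 2)).sub ((B 2).mul (C 1)))).sub
      ((A 1).mul (((B 0).mul (C 2)).sub ((B 2).mul (C 0))))).add
      ((A 2).mul (((B 0).mul (C 1)).sub ((B 1).mul (C 0))))
  -- derivative of the cross-product components
  have crossD : ∀ (v : ℝ) (i : Fin 3),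
      HasDerivAt (fun w => mcross (f w) (d1 w) i) (mcross (f v) (d2 v) i) v := by
    intro v i
    fin_cases i
    · simp only [Fin.zero_eta, mcross, Matrix.cons_val_zero]
      have h := ((Df v 1).mul (Df1 v 2)).sub ((Df v 2).mul (Df1 v 1))
      exact h.congr_deriv (by ring)
    · simp only [Fin.mk_one, mcross, Matrix.cons_val_one, Matrix.head_cons]
      have h := ((Df v 2).mul (Df1 v 0)).sub ((Df v 0).mul (Df1 v 2))
      exact h.congr_deriv (by simp only [Matrix.cons_val_zero]; ring)
    · simp only [Fin.reduceFinMk, mcross, Matrix.cons_val_two, Matrix.tail_cons,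
        Matrix.head_cons]
      have h := ((Df v 1).mul (Df1 v 0)).sub ((Df v 0).mul (Df1 v 1))
      exact h.congr_deriv (by ring)
  -- pairing of f and d1 with P
  have hfP : ∀ v ∈ Set.Ioo a b, mink (f v) (P v) = κg v / Real.sqrt (κg v ^ 2 - 1) := by
    intro v hv
    rw [hP v, hse v, mink_smul_add, mink_self_mcross, hf1 v hv, div_eq_mul_inv]
    ring
  have hf1P : ∀ v ∈ Set.Ioo a b, mink (d1 v) (P v) = 0 := by
    intro v hv
    rw [hP v, hse v, mink_smul_add, mink_snd_mcross, mink_comm (d1 v), o1 v hv]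
    ring
  -- Forward direction: constant curvature implies P constant
  have Pconst : (∀ v ∈ Set.Ioo a b, deriv κg v = 0) → ∀ v ∈ Set.Ioo a b, P v = P v₀ := by
    intro hder v hv
    have κc : ∀ w ∈ Set.Ioo a b, κg w = κg v₀ :=
      fun w hw => constOn κg hκdiff hder w hw v₀ hv₀
    funext i
    have Qd : ∀ w : ℝ, HasDerivAt
        (fun u => (Real.sqrt (κg v₀ ^ 2 - 1))⁻¹ * (κg v₀ * f u i + mcross (f u) (d1 u) i))
        ((Real.sqrt (κg v₀ ^ 2 - 1))⁻¹ * (κg v₀ * d1 w i + mcross (f w) (d2 w) i)) w :=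
      fun w => (((Df w i).const_mul (κg v₀)).add (crossD w i)).const_mul _
    have Qdiff : Differentiable ℝ
        (fun u => (Real.sqrt (κg v₀ ^ 2 - 1))⁻¹ * (κg v₀ * f u i + mcross (f u) (d1 u) i)) :=
      fun w => (Qd w).differentiableAt
    have Qder0 : ∀ w ∈ Set.Ioo a b, deriv
        (fun u => (Real.sqrt (κg v₀ ^ 2 - 1))⁻¹ * (κg v₀ * f u i + mcross (f u) (d1 u) i)) w
        = 0 := by
      intro w hw
      rw [(Qd w).deriv]
      have hx := keyA (f w) (d1 w) (d2 w) (hf1 w hw) (o1 w hw) (hf2 w hw) (o3 w hw)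
        (o2 w hw) i
      rw [hx, ← hκe w, κc w hw]
      ring
    have hQ := constOn _ Qdiff Qder0 v hv v₀ hv₀
    have ev : ∀ w ∈ Set.Ioo a b, P w i =
        (Real.sqrt (κg v₀ ^ 2 - 1))⁻¹ * (κg v₀ * f w i + mcross (f w) (d1 w) i) := by
      intro w hw
      rw [hP w, hse w, κc w hw]
      simp [Pi.smul_apply, Pi.add_apply, smul_eq_mul]
    rw [ev v hv, ev v₀ hv₀, hQ]
  -- Converse direction
  have conv : (∃ c, ∀ v ∈ Set.Ioo a b, P v = c) → ∀ v ∈ Set.Ioo a b, deriv κg v = 0 := by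
    rintro ⟨c, hc⟩ v hv
    have gD : ∀ w : ℝ, HasDerivAt (fun u => mink (f u) c) (mink (d1 w) c) w := by
      intro w
      have h := (((Df w 0).mul_const (c 0)).add ((Df w 1).mul_const (c 1))).sub
        ((Df w 2).mul_const (c 2))
      simp only [mink]
      exact h
    have gdiff : Differentiable ℝ (fun u => mink (f u) c) := fun w => (gD w).differentiableAt
    have gder0 : ∀ w ∈ Set.Ioo a b, deriv (fun u => mink (f u) c) w = 0 := by
      intro w hw
      rw [(gD w).deriv, ← hc w hw, hf1P w hw]
    have gconst := constOn _ gdiff gder0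
    have hr : ∀ w ∈ Set.Ioo a b,
        κg w / Real.sqrt (κg w ^ 2 - 1) = κg v₀ / Real.sqrt (κg v₀ ^ 2 - 1) := by
      intro w hw
      rw [← hfP w hw, ← hfP v₀ hv₀, hc w hw, hc v₀ hv₀]
      exact gconst w hw v₀ hv₀
    have κc : ∀ w ∈ Set.Ioo a b, κg w = κg v₀ := by
      intro w hw
      have hA := hκ w hw
      have hB := hκ v₀ hv₀
      have hpA : (0:ℝ) < κg w ^ 2 - 1 := by linarith
      have hpB : (0:ℝ) < κg v₀ ^ 2 - 1 := by linarith
      have sA := Real.sqrt_pos.mpr hpA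
      have sB := Real.sqrt_pos.mpr hpB
      have sA2 : Real.sqrt (κg w ^ 2 - 1) ^ 2 = κg w ^ 2 - 1 := Real.sq_sqrt hpA.le
      have sB2 : Real.sqrt (κg v₀ ^ 2 - 1) ^ 2 = κg v₀ ^ 2 - 1 := Real.sq_sqrt hpB.le
      have h := hr w hw
      rw [div_eq_div_iff (ne_of_gt sA) (ne_of_gt sB)] at h
      have hsq : κg w ^ 2 * (κg v₀ ^ 2 - 1) = κg v₀ ^ 2 * (κg w ^ 2 - 1) := by
        have h2 := congrArg (fun x => x ^ 2) h
        simp only [mul_pow] at h2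
        rw [sA2, sB2] at h2
        linarith
      have hAB : κg w ^ 2 = κg v₀ ^ 2 := by linear_combination -hsq
      have hseq : Real.sqrt (κg w ^ 2 - 1) = Real.sqrt (κg v₀ ^ 2 - 1) := by rw [hAB]
      rw [hseq] at h
      exact mul_right_cancel₀ (ne_of_gt sB) h
    exact evd κg (κg v₀) v hv κc
  -- conclusion
  refine ⟨⟨fun hder => ⟨P v₀, Pconst hder⟩, conv⟩, ?_⟩
  intro hder
  have κc : ∀ w ∈ Set.Ioo a b, κg w = κg v₀ :=
    fun w hw => constOn κg hκdiff hder w hw v₀ hv₀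
  have hκ0 := hκ v₀ hv₀
  have hpos : (0:ℝ) < κg v₀ ^ 2 - 1 := by linarith
  have hs2 : Real.sqrt (κg v₀ ^ 2 - 1) ^ 2 = κg v₀ ^ 2 - 1 := Real.sq_sqrt hpos.le
  have hsne : Real.sqrt (κg v₀ ^ 2 - 1) ≠ 0 := ne_of_gt (Real.sqrt_pos.mpr hpos)
  have hPP : mink (P v₀) (P v₀) = 1 := by
    rw [hP v₀, hse v₀, mink_smul_add_self, mink_self_mcross, mink_mcross_mcross,
      hf1 v₀ hv₀, o1 v₀ hv₀, hf2 v₀ hv₀, inv_pow, hs2]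
    field_simp
    ring
  refine ⟨P v₀, κg v₀ / Real.sqrt (κg v₀ ^ 2 - 1), hPP, ?_⟩
  intro v hv
  refine ⟨Pconst hder v hv, by rw [κc v hv], hf1 v hv, ?_⟩
  rw [← Pconst hder v hv, hfP v hv, κc v hv]
end
end

section
/- Let f : I → ℝ³ be a smooth unit speed space-like curve on S²₁ (⟨f,f⟩ = 1, ⟨f',f'⟩ = 1), with Sabban frame {f, t, s} and geodesic curvature κ_g, and fix v₀ ∈ I with κ_g(v₀)² > 1. Let u₀ = d_f(v₀) = (−κ_g(v₀)·f(v₀) − s(v₀))/√(κ_g(v₀)² − 1) and r₀ = −κ_g(v₀)/√(κ_g(v₀)² − 1). Then the function h(v) = ⟨f(v), u₀⟩ satisfies h(v₀) = r₀, h'(v₀) = 0, and h''(v₀) = 0; that is, f and the pseudo-circle PS¹(u₀, r₀) have at least a 3-point contact at f(v₀). -/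
noncomputable section

open Real

lemma hasDerivAt_apply' {f : ℝ → Fin 3 → ℝ} {f' : Fin 3 → ℝ} {v : ℝ} (i : Fin 3)
    (hf : HasDerivAt f f' v) : HasDerivAt (fun v => f v i) (f' i) v := by
  have := ((ContinuousLinearMap.proj (R := ℝ) (φ := fun _ : Fin 3 => ℝ) i).hasFDerivAt).comp_hasDerivAt v hf
  exact this

lemma mink_hasDerivAt {f g : ℝ → Fin 3 → ℝ} {f' g' : Fin 3 → ℝ} {v : ℝ}
    (hf : HasDerivAt f f' v) (hg : HasDerivAt g g' v) :
    HasDerivAt (fun v => mink (f v) (g v)) (mink f' (g v) + mink (f v) g') v := by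
  simp only [mink]
  have h0 := (hasDerivAt_apply' 0 hf).mul (hasDerivAt_apply' 0 hg)
  have h1 := (hasDerivAt_apply' 1 hf).mul (hasDerivAt_apply' 1 hg)
  have h2 := (hasDerivAt_apply' 2 hf).mul (hasDerivAt_apply' 2 hg)
  convert (h0.add h1).sub h2 using 1
  · rfl
  · rfl
  · rfl
  · ring

/-- f and the pseudo-circle of geodesic curvature PS¹(u₀, r₀), with
u₀ = d_f(v₀) the de Sitter evolute and r₀ = −κ_g(v₀)/√(κ_g(v₀)² − 1), have at least
a 3-point contact at f(v₀): the height function h(v) = ⟨f(v), u₀⟩ satisfies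
h(v₀) = r₀, h'(v₀) = 0 and h''(v₀) = 0. -/
theorem deSitter_evolute_three_point_contact
    (a b : ℝ) (I : Set ℝ) (hI : I = Set.Ioo a b)
    (f : ℝ → Fin 3 → ℝ) (hf : ContDiff ℝ (⊤ : ℕ∞) f)
    (hf1 : ∀ v ∈ I, mink (f v) (f v) = 1)
    (hf2 : ∀ v ∈ I, mink (deriv f v) (deriv f v) = 1)
    (t : ℝ → Fin 3 → ℝ) (ht : ∀ v, t v = deriv f v)
    (s : ℝ → Fin 3 → ℝ) (hs : ∀ v, s v = mcross (f v) (t v))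
    (κg : ℝ → ℝ) (hκg : ∀ v, κg v = mdet (f v) (t v) (deriv t v))
    (v₀ : ℝ) (hv₀ : v₀ ∈ I) (hκv : κg v₀ ^ 2 > 1)
    (u₀ : Fin 3 → ℝ)
    (hu₀ : u₀ = (Real.sqrt (κg v₀ ^ 2 - 1))⁻¹ • (-(κg v₀) • f v₀ - s v₀))
    (r₀ : ℝ) (hr₀ : r₀ = -(κg v₀) / Real.sqrt (κg v₀ ^ 2 - 1))
    (h : ℝ → ℝ) (hh : ∀ v, h v = mink (f v) u₀) :
    h v₀ = r₀ ∧ deriv h v₀ = 0 ∧ deriv (deriv h) v₀ = 0 := by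

  -- basic setup
  set k := κg v₀ with hk
  have hq0 : (0:ℝ) < k ^ 2 - 1 := by linarith
  set q := Real.sqrt (k ^ 2 - 1) with hqdef
  have hq : 0 < q := Real.sqrt_pos.mpr hq0
  have hqne : q ≠ 0 := ne_of_gt hq
  -- differentiability
  have hfd : Differentiable ℝ f := hf.differentiable (by simp)
  have htd : Differentiable ℝ t := by
    have : t = deriv f := funext ht
    rw [this]
    exact ((contDiff_infty_iff_deriv.mp (hf.of_le (by simp))).2).differentiable (by simp)
  have hdf : ∀ v, HasDerivAt f (t v) v := by
    intro v; rw [ht]; exact (hfd v).hasDerivAt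
  have hdt : ∀ v, HasDerivAt t (deriv t v) v := fun v => (htd v).hasDerivAt
  -- symmetry of mink
  have mink_comm : ∀ x y : Fin 3 → ℝ, mink x y = mink y x := by
    intro x y; simp only [mink]; ring
  -- algebraic identities with s
  have hfs : mink (f v₀) (s v₀) = 0 := by
    simp only [hs, mink, mcross, Matrix.cons_val_zero, Matrix.cons_val_one, Matrix.head_cons,
      Matrix.cons_val_two, Matrix.tail_cons]
    ring
  have hts : mink (t v₀) (s v₀) = 0 := by
    simp only [hs, mink, mcross, Matrix.cons_val_zero, Matrix.cons_val_one, Matrix.head_cons,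
      Matrix.cons_val_two, Matrix.tail_cons]
    ring
  have ht's : mink (deriv t v₀) (s v₀) = k := by
    rw [hk, hκg, hs]
    simp only [mink, mcross, mdet, Matrix.det_fin_three, Matrix.of_apply, Matrix.cons_val_zero,
      Matrix.cons_val_one, Matrix.head_cons, Matrix.cons_val_two, Matrix.tail_cons]
    ring
  -- mink against u₀
  have hu : ∀ x : Fin 3 → ℝ, mink x u₀ = q⁻¹ * (-k * mink x (f v₀) - mink x (s v₀)) := by
    intro x
    rw [hu₀]
    simp only [mink, Pi.smul_apply, Pi.sub_apply, Pi.neg_apply, smul_eq_mul, neg_smul, neg_mul,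
      ← hk, ← hqdef]
    ring
  -- I is open, membership gives eventual equality
  have hIopen : IsOpen I := hI ▸ isOpen_Ioo
  have hnhds : I ∈ nhds v₀ := hIopen.mem_nhds hv₀
  -- ⟨f, t⟩ = 0 on I
  have hft : ∀ v ∈ I, mink (f v) (t v) = 0 := by
    intro v hv
    have hD : HasDerivAt (fun v => mink (f v) (f v))
        (mink (t v) (f v) + mink (f v) (t v)) v := mink_hasDerivAt (hdf v) (hdf v)
    have hEv : (fun v => mink (f v) (f v)) =ᶠ[nhds v] fun _ => (1:ℝ) := by
      filter_upwards [hIopen.mem_nhds hv] with w hw using hf1 w hw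
    have h1 : deriv (fun v => mink (f v) (f v)) v = 0 := by
      rw [hEv.deriv_eq, deriv_const]
    have h2 := hD.deriv
    rw [h1] at h2
    rw [mink_comm (t v) (f v)] at h2
    linarith
  -- ⟨f, t'⟩ = -1 at v₀
  have hft' : mink (f v₀) (deriv t v₀) = -1 := by
    have hD : HasDerivAt (fun v => mink (f v) (t v))
        (mink (t v₀) (t v₀) + mink (f v₀) (deriv t v₀)) v₀ :=
      mink_hasDerivAt (hdf v₀) (hdt v₀)
    have hEv : (fun v => mink (f v) (t v)) =ᶠ[nhds v₀] fun _ => (0:ℝ) := by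
      filter_upwards [hnhds] with w hw using hft w hw
    have h1 : deriv (fun v => mink (f v) (t v)) v₀ = 0 := by
      rw [hEv.deriv_eq, deriv_const]
    have h2 := hD.deriv
    rw [h1] at h2
    have htt : mink (t v₀) (t v₀) = 1 := by rw [ht]; exact hf2 v₀ hv₀
    rw [htt] at h2
    linarith
  -- first derivative of h
  have hmz : ∀ x : Fin 3 → ℝ, mink x 0 = 0 := by
    intro x; simp [mink]
  have hheq : h = fun v => mink (f v) u₀ := funext hh
  have hh1 : deriv h = fun v => mink (t v) u₀ := by
    funext v
    have hD : HasDerivAt h (mink (t v) u₀ + mink (f v) 0) v := by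
      rw [hheq]
      exact mink_hasDerivAt (hdf v) (hasDerivAt_const v u₀)
    rw [hmz, add_zero] at hD
    exact hD.deriv
  refine ⟨?_, ?_, ?_⟩
  · rw [hh, hu, hf1 v₀ hv₀, hfs, hr₀, div_eq_inv_mul]
    ring
  · rw [hh1]
    show mink (t v₀) u₀ = 0
    rw [hu, mink_comm (t v₀) (f v₀), hft v₀ hv₀, hts]
    ring
  · rw [hh1]
    have hD : HasDerivAt (fun v => mink (t v) u₀) (mink (deriv t v₀) u₀ + mink (t v₀) 0) v₀ :=
      mink_hasDerivAt (hdt v₀) (hasDerivAt_const v₀ u₀)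
    rw [hmz, add_zero] at hD
    rw [hD.deriv, hu, mink_comm (deriv t v₀) (f v₀), hft', ht's]
    ring
end
end

section
/- Let γ : I → ℝ³ be a smooth unit speed space-like curve (⟨γ'(s),γ'(s)⟩ = 1) whose acceleration γ''(s) is space-like and non-zero for all s. Define the Frenet frame T(s) = γ'(s), N(s) = γ''(s)/‖γ''(s)‖, B(s) = N(s) × T(s), the curvature κ(s) = ‖γ''(s)‖ and the torsion τ(s) = −⟨N'(s), B(s)⟩. Suppose γ is a Bertrand curve, i.e. there exist real constants A, C, both non-zero, with A·κ(s) + C·τ(s) = 1 for all s, and assume A > 0 and |C| < A. Set ξ₁ = artanh(C/A) and let ε ∈ {1, −1}. Then the curve f(s) = ε·(cosh(ξ₁)·T(s) + sinh(ξ₁)·B(s)) satisfies: ⟨f(s), f(s)⟩ = 1 (so f lies on S²₁), f'(s) = (ε·cosh(ξ₁)/A)·N(s) (so ⟨f'(s), f'(s)⟩ = cosh²(ξ₁)/A² > 0, and f is space-like), and γ'(s) = ε·cosh(ξ₁)·f(s) + A·tanh(ξ₁)·(f(s) × f'(s)) for all s ∈ I. -/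
noncomputable section

open Real

lemma mink_smul_left (c : ℝ) (x y : Fin 3 → ℝ) : mink (c • x) y = c * mink x y := by
  simp [mink, Pi.smul_apply, smul_eq_mul]; ring

lemma mink_smul_right (c : ℝ) (x y : Fin 3 → ℝ) : mink x (c • y) = c * mink x y := by
  simp [mink, Pi.smul_apply, smul_eq_mul]; ring

lemma mink_combo (p q r t : ℝ) (x y z w : Fin 3 → ℝ) :
    mink (p • x + q • y) (r • z + t • w) =
      p * r * mink x z + p * t * mink x w + q * r * mink y z + q * t * mink y w := by
  simp [mink, Pi.smul_apply, Pi.add_apply, smul_eq_mul]; ring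

lemma mcross_antisymm (x y : Fin 3 → ℝ) : mcross x y = -mcross y x := by
  funext i; fin_cases i <;> simp [mcross] <;> ring

lemma mcross_self (x : Fin 3 → ℝ) : mcross x x = 0 := by
  funext i; fin_cases i <;> simp [mcross] <;> ring

lemma mcross_smul_right (c : ℝ) (x y : Fin 3 → ℝ) : mcross x (c • y) = c • mcross x y := by
  funext i; fin_cases i <;> simp [mcross, Pi.smul_apply, smul_eq_mul] <;> ring

lemma mcross_combo (p q r : ℝ) (x y z : Fin 3 → ℝ) :
    mcross (p • x + q • y) (r • z) = (p * r) • mcross x z + (q * r) • mcross y z := by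
  funext i; fin_cases i <;>
    simp [mcross, Pi.smul_apply, Pi.add_apply, smul_eq_mul] <;> ring

lemma mcross_triple (a b c : Fin 3 → ℝ) :
    mcross a (mcross b c) = mink a b • c - mink a c • b := by
  funext i; fin_cases i <;>
    simp [mcross, mink, Pi.smul_apply, Pi.sub_apply, smul_eq_mul] <;> ring

lemma mink_mcross_left (x y : Fin 3 → ℝ) : mink (mcross x y) x = 0 := by
  simp [mcross, mink]; ring

lemma mink_mcross_right (x y : Fin 3 → ℝ) : mink (mcross x y) y = 0 := by
  simp [mcross, mink]; ring

lemma mink_mcross_sq (x y : Fin 3 → ℝ) :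
    mink (mcross x y) (mcross x y) = mink x y ^ 2 - mink x x * mink y y := by
  simp [mcross, mink]; ring

lemma hasDerivAt_mink_s7 {u v : ℝ → Fin 3 → ℝ} {u' v' : Fin 3 → ℝ} {s : ℝ}
    (hu : HasDerivAt u u' s) (hv : HasDerivAt v v' s) :
    HasDerivAt (fun t => mink (u t) (v t)) (mink u' (v s) + mink (u s) v') s := by
  have hui : ∀ i, HasDerivAt (fun t => u t i) (u' i) s := hasDerivAt_pi.mp hu
  have hvi : ∀ i, HasDerivAt (fun t => v t i) (v' i) s := hasDerivAt_pi.mp hv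
  have := (((hui 0).mul (hvi 0)).add ((hui 1).mul (hvi 1))).sub ((hui 2).mul (hvi 2))
  refine this.congr_deriv ?_
  unfold mink; ring

lemma hasDerivAt_mcross {u v : ℝ → Fin 3 → ℝ} {u' v' : Fin 3 → ℝ} {s : ℝ}
    (hu : HasDerivAt u u' s) (hv : HasDerivAt v v' s) :
    HasDerivAt (fun t => mcross (u t) (v t)) (mcross u' (v s) + mcross (u s) v') s := by
  have hui : ∀ i, HasDerivAt (fun t => u t i) (u' i) s := hasDerivAt_pi.mp hu
  have hvi : ∀ i, HasDerivAt (fun t => v t i) (v' i) s := hasDerivAt_pi.mp hv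
  apply hasDerivAt_pi.mpr
  intro i
  fin_cases i
  · have := (((hui 1).mul (hvi 2)).sub ((hui 2).mul (hvi 1)))
    refine this.congr_deriv ?_
    simp [mcross, Pi.add_apply]; ring
  · have := (((hui 2).mul (hvi 0)).sub ((hui 0).mul (hvi 2)))
    refine this.congr_deriv ?_
    simp [mcross, Pi.add_apply]; ring
  · have := (((hui 1).mul (hvi 0)).sub ((hui 0).mul (hvi 1)))
    refine this.congr_deriv ?_
    simp [mcross, Pi.add_apply]; ring


/-- every space-like Bertrand curve γ (with space-like normal, A > 0,
|C| < A) arises from the unit speed space-like curve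
f(s) = ε·(cosh ξ₁·T(s) + sinh ξ₁·B(s)) on S²₁, where ξ₁ = artanh(C/A)
(encoded by tanh ξ₁ = C/A): f lies on S²₁, f' = (ε·cosh ξ₁/A)·N is space-like with
⟨f', f'⟩ = cosh² ξ₁/A², and γ' = ε·cosh ξ₁·f + A·tanh ξ₁·(f × f'). -/
theorem spacelike_bertrand_from_deSitter_curve
    (a b : ℝ) (I : Set ℝ) (hI : I = Set.Ioo a b)
    (γ : ℝ → Fin 3 → ℝ) (hγ : ContDiff ℝ (⊤ : ℕ∞) γ)
    (hunit : ∀ s ∈ I, mink (deriv γ s) (deriv γ s) = 1)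
    (hacc : ∀ s ∈ I, mink (deriv (deriv γ) s) (deriv (deriv γ) s) > 0)
    (T N B : ℝ → Fin 3 → ℝ)
    (hT : ∀ s, T s = deriv γ s)
    (hN : ∀ s, N s = (mnorm (deriv (deriv γ) s))⁻¹ • deriv (deriv γ) s)
    (hB : ∀ s, B s = mcross (N s) (T s))
    (κ τ : ℝ → ℝ)
    (hκ : ∀ s, κ s = mnorm (deriv (deriv γ) s))
    (hτ : ∀ s, τ s = -(mink (deriv N s) (B s)))
    (A C : ℝ) (hA0 : A ≠ 0) (hC0 : C ≠ 0)
    (hbertrand : ∀ s ∈ I, A * κ s + C * τ s = 1)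
    (hApos : 0 < A) (hCA : |C| < A)
    (ξ : ℝ) (hξ : Real.tanh ξ = C / A)
    (ε : ℝ) (hε : ε = 1 ∨ ε = -1)
    (f : ℝ → Fin 3 → ℝ)
    (hf : ∀ s, f s = ε • (Real.cosh ξ • T s + Real.sinh ξ • B s)) :
    ∀ s ∈ I,
      mink (f s) (f s) = 1 ∧
      deriv f s = (ε * Real.cosh ξ / A) • N s ∧
      mink (deriv f s) (deriv f s) = Real.cosh ξ ^ 2 / A ^ 2 ∧
      deriv γ s = (ε * Real.cosh ξ) • f s +
        (A * Real.tanh ξ) • mcross (f s) (deriv f s) := by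
  subst hI
  intro s hs
  have hIopen : IsOpen (Set.Ioo a b) := isOpen_Ioo
  have hmem : Set.Ioo a b ∈ nhds s := hIopen.mem_nhds hs
  -- smoothness facts
  have h1 := contDiff_infty_iff_deriv.mp (hγ.of_le (by simp))
  have h2 := contDiff_infty_iff_deriv.mp h1.2
  have hgdiff : Differentiable ℝ (deriv γ) := h2.1
  have hhdiff : Differentiable ℝ (deriv (deriv γ)) := (contDiff_infty_iff_deriv.mp h2.2).1
  -- scalar facts on I
  have hκt : ∀ t ∈ Set.Ioo a b, κ t = Real.sqrt (mink (deriv (deriv γ) t) (deriv (deriv γ) t)) := by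
    intro t ht
    rw [hκ t, mnorm, abs_of_pos (hacc t ht)]
  have hκsq : ∀ t ∈ Set.Ioo a b, κ t ^ 2 = mink (deriv (deriv γ) t) (deriv (deriv γ) t) := by
    intro t ht
    rw [hκt t ht, Real.sq_sqrt (le_of_lt (hacc t ht))]
  have hκpos : ∀ t ∈ Set.Ioo a b, 0 < κ t := by
    intro t ht
    rw [hκt t ht]
    exact Real.sqrt_pos.mpr (hacc t ht)
  have horth : ∀ t ∈ Set.Ioo a b, mink (deriv γ t) (deriv (deriv γ) t) = 0 := by
    intro t ht
    have hder : HasDerivAt (fun r => mink (deriv γ r) (deriv γ r))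
        (mink (deriv (deriv γ) t) (deriv γ t) + mink (deriv γ t) (deriv (deriv γ) t)) t :=
      hasDerivAt_mink_s7 (hgdiff t).hasDerivAt (hgdiff t).hasDerivAt
    have hconst : HasDerivAt (fun r => mink (deriv γ r) (deriv γ r)) 0 t := by
      apply (hasDerivAt_const t (1 : ℝ)).congr_of_eventuallyEq
      filter_upwards [hIopen.mem_nhds ht] with r hr using hunit r hr
    have huniq := hder.unique hconst
    rw [mink_comm (deriv (deriv γ) t) (deriv γ t)] at huniq
    linarith
  have hNval : ∀ t ∈ Set.Ioo a b, N t = (κ t)⁻¹ • deriv (deriv γ) t := by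
    intro t ht
    rw [hN t, ← hκ t]
  have hNN : ∀ t ∈ Set.Ioo a b, mink (N t) (N t) = 1 := by
    intro t ht
    rw [hNval t ht, mink_smul_left, mink_smul_right, ← hκsq t ht, sq]
    field_simp [(hκpos t ht).ne']
  have hNT : ∀ t ∈ Set.Ioo a b, mink (N t) (T t) = 0 := by
    intro t ht
    rw [hNval t ht, hT t, mink_smul_left, mink_comm, horth t ht, mul_zero]
  have hTT : ∀ t ∈ Set.Ioo a b, mink (T t) (T t) = 1 := by
    intro t ht; rw [hT t]; exact hunit t ht
  have hBB : mink (B s) (B s) = -1 := by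
    rw [hB s, mink_mcross_sq, hNN s hs, hNT s hs, hTT s hs]; ring
  have hTB : mink (T s) (B s) = 0 := by
    rw [hB s, mink_comm]; exact mink_mcross_right _ _
  -- differentiability of κ and N at s
  have hmdiff : DifferentiableAt ℝ (fun t => mink (deriv (deriv γ) t) (deriv (deriv γ) t)) s :=
    (hasDerivAt_mink_s7 (hhdiff s).hasDerivAt (hhdiff s).hasDerivAt).differentiableAt
  have hκeq : κ =ᶠ[nhds s] fun t => Real.sqrt (mink (deriv (deriv γ) t) (deriv (deriv γ) t)) :=
    Filter.eventuallyEq_of_mem hmem hκt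
  have hκdiff : DifferentiableAt ℝ κ s :=
    (hκeq.differentiableAt_iff).mpr (hmdiff.sqrt (ne_of_gt (hacc s hs)))
  have hκne : κ s ≠ 0 := ne_of_gt (hκpos s hs)
  have hNeq : N =ᶠ[nhds s] fun t => (κ t)⁻¹ • deriv (deriv γ) t :=
    Filter.eventuallyEq_of_mem hmem hNval
  have hNdiff : DifferentiableAt ℝ N s :=
    (hNeq.differentiableAt_iff).mpr ((hκdiff.inv hκne).smul (hhdiff s))
  have hNd : HasDerivAt N (deriv N s) s := hNdiff.hasDerivAt
  -- <N', N> = 0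
  have hdNN : mink (deriv N s) (N s) = 0 := by
    have hder := hasDerivAt_mink_s7 hNd hNd
    have hconst : HasDerivAt (fun t => mink (N t) (N t)) 0 s := by
      apply (hasDerivAt_const s (1 : ℝ)).congr_of_eventuallyEq
      filter_upwards [hmem] with r hr using hNN r hr
    have huniq := hder.unique hconst
    rw [mink_comm (N s) (deriv N s)] at huniq
    linarith
  -- derivative of T
  have hTfun : T = deriv γ := funext hT
  have hTd : HasDerivAt T (deriv (deriv γ) s) s := by
    rw [hTfun]; exact (hgdiff s).hasDerivAt
  -- h s = κ s • N s
  have hhsN : deriv (deriv γ) s = κ s • N s := by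
    rw [hNval s hs, smul_smul, mul_inv_cancel₀ hκne, one_smul]
  -- T = N × B at s
  have hTcross : T s = mcross (N s) (B s) := by
    rw [hB s, mcross_triple, hNN s hs, hNT s hs, one_smul, zero_smul, sub_zero]
  -- derivative of B
  have hBfun : B = fun t => mcross (N t) (T t) := funext hB
  have hBd : HasDerivAt B (τ s • N s) s := by
    rw [hBfun]
    have hraw := hasDerivAt_mcross hNd hTd
    convert hraw using 1
    have hx1 : mcross (N s) (deriv (deriv γ) s) = 0 := by
      rw [hhsN, mcross_smul_right, mcross_self, smul_zero]
    have hx2 : mcross (deriv N s) (T s) = τ s • N s := by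
      rw [hTcross, mcross_triple, hdNN, zero_smul, hτ s, zero_sub, neg_smul]
    rw [hx1, hx2, add_zero]
  -- derivative of f
  have hffun : f = fun t => ε • (Real.cosh ξ • T t + Real.sinh ξ • B t) := funext hf
  have hfd : HasDerivAt f
      (ε • (Real.cosh ξ • deriv (deriv γ) s + Real.sinh ξ • (τ s • N s))) s := by
    rw [hffun]
    exact ((hTd.const_smul (Real.cosh ξ)).add (hBd.const_smul (Real.sinh ξ))).const_smul ε
  -- scalar identities
  have hcoshne : Real.cosh ξ ≠ 0 := ne_of_gt (Real.cosh_pos ξ)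
  have hsinh : Real.sinh ξ = C / A * Real.cosh ξ := by
    rw [← hξ, Real.tanh_eq_sinh_div_cosh]; field_simp
  have hcs : Real.cosh ξ ^ 2 - Real.sinh ξ ^ 2 = 1 := Real.cosh_sq_sub_sinh_sq ξ
  have he2 : ε * ε = 1 := by rcases hε with rfl | rfl <;> norm_num
  have hbert := hbertrand s hs
  have key : ε • (Real.cosh ξ • deriv (deriv γ) s + Real.sinh ξ • (τ s • N s)) =
      (ε * Real.cosh ξ / A) • N s := by
    rw [hhsN, smul_smul, smul_smul, ← add_smul, smul_smul]
    congr 1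
    have hsc : Real.cosh ξ * κ s + Real.sinh ξ * τ s = Real.cosh ξ / A := by
      rw [hsinh]
      field_simp
      linear_combination hbert
    rw [hsc]
    ring
  have hfderiv : deriv f s = (ε * Real.cosh ξ / A) • N s := by
    rw [hfd.deriv, key]
  have hfs : f s = (ε * Real.cosh ξ) • T s + (ε * Real.sinh ξ) • B s := by
    rw [hf s, smul_add, smul_smul, smul_smul]
  refine ⟨?_, hfderiv, ?_, ?_⟩
  · rw [hfs, mink_combo, hTT s hs, hTB, hBB, mink_comm (B s) (T s), hTB]
    linear_combination (Real.cosh ξ ^ 2 - Real.sinh ξ ^ 2) * he2 + hcs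
  · rw [hfderiv, mink_smul_left, mink_smul_right, hNN s hs]
    field_simp
    linear_combination he2
  · -- the reconstruction formula
    have hTN : mcross (T s) (N s) = -B s := by
      rw [mcross_antisymm, hB s]
    have hNB : mcross (N s) (B s) = T s := hTcross.symm
    have hBN : mcross (B s) (N s) = -T s := by
      rw [mcross_antisymm, hNB]
    have hsinhA : A * Real.sinh ξ = C * Real.cosh ξ := by
      rw [hsinh]; field_simp
    rw [hfderiv, hfs, mcross_combo, hTN, hBN, ← hTfun]
    funext i
    simp only [Pi.add_apply, Pi.smul_apply, Pi.neg_apply, smul_eq_mul, hξ]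
    field_simp
    linear_combination (-(T s i * A)) * hcs +
      (-(T s i * Real.sinh ξ + Real.cosh ξ * B s i)) * hsinhA +
      (-(Real.cosh ξ * ((T s i * Real.cosh ξ + Real.sinh ξ * B s i) * A +
        C * (-(Real.cosh ξ * B s i) + -(T s i * Real.sinh ξ))))) * he2
end
end

section
/- Let f : I → ℝ³ be a smooth unit speed space-like curve on S²₁ (⟨f,f⟩ = 1, ⟨f',f'⟩ = 1). Fix constants θ ≠ 0 and u > 0, set ξ₁ = tanh(θ)·ln(u) and a = u·cosh(θ)·cosh(ξ₁), and define the space-like Bertrand curve γ(v) = a·∫₀ᵛ f(t)dt + a·tanh(ξ₁)·∫₀ᵛ f(t) × f'(t) dt. Then for all v ∈ I, γ'(v) = u·cosh(θ)·(cosh(ξ₁)·f(v) + sinh(ξ₁)·(f(v) × f'(v))); that is, γ'(v) is the v-parameter curve of the space-like constant slope surface x(u,v) = u·cosh(θ)·(cosh(ξ₁)·f(v) + sinh(ξ₁)·f(v) × f'(v)) lying in the space-like cone, so γ' lies on this surface. -/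
noncomputable section

open Real

/-- with θ ≠ 0, u > 0, ξ₁ = tanh θ·ln u and a = u·cosh θ·cosh ξ₁, the
derivative of the space-like Bertrand curve γ(v) = a·∫₀ᵛ f + a·tanh ξ₁·∫₀ᵛ f × f'
is the v-parameter curve of the space-like constant slope surface
x(u,v) = u·cosh θ·(cosh ξ₁·f(v) + sinh ξ₁·f(v) × f'(v)) lying in the space-like
cone, i.e. γ'(v) = u·cosh θ·(cosh ξ₁·f(v) + sinh ξ₁·(f(v) × f'(v))). -/
theorem spacelike_bertrand_derivative_on_constant_slope_surface
    (a b : ℝ) (I : Set ℝ) (hI : I = Set.Ioo a b) (h0 : (0:ℝ) ∈ I)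
    (f : ℝ → Fin 3 → ℝ) (hf : ContDiff ℝ (⊤ : ℕ∞) f)
    (hf1 : ∀ v ∈ I, mink (f v) (f v) = 1)
    (hf2 : ∀ v ∈ I, mink (deriv f v) (deriv f v) = 1)
    (θ u : ℝ) (hθ : θ ≠ 0) (hu : 0 < u)
    (ξ : ℝ) (hξ : ξ = Real.tanh θ * Real.log u)
    (A : ℝ) (hA : A = u * Real.cosh θ * Real.cosh ξ)
    (γ : ℝ → Fin 3 → ℝ)
    (hγ : ∀ v, γ v = A • (∫ w in (0:ℝ)..v, f w) +
        (A * Real.tanh ξ) • (∫ w in (0:ℝ)..v, mcross (f w) (deriv f w))) :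
    ∀ v ∈ I,
      deriv γ v = (u * Real.cosh θ) •
        (Real.cosh ξ • f v + Real.sinh ξ • mcross (f v) (deriv f v)) := by
  intro v hv
  have hfc : Continuous f := hf.continuous
  have hdc : Continuous (deriv f) := hf.continuous_deriv (by simp)
  have hgc : Continuous (fun w => mcross (f w) (deriv f w)) := by
    apply continuous_pi
    intro i
    fin_cases i <;> simp [mcross] <;> fun_prop
  have h1 : HasDerivAt (fun v => ∫ w in (0:ℝ)..v, f w) (f v) v :=
    intervalIntegral.integral_hasDerivAt_right (hfc.intervalIntegrable _ _)
      (hfc.stronglyMeasurableAtFilter _ _) hfc.continuousAt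
  have h2 : HasDerivAt (fun v => ∫ w in (0:ℝ)..v, mcross (f w) (deriv f w))
      (mcross (f v) (deriv f v)) v :=
    intervalIntegral.integral_hasDerivAt_right (hgc.intervalIntegrable _ _)
      (hgc.stronglyMeasurableAtFilter _ _) hgc.continuousAt
  have hγd : HasDerivAt γ
      (A • f v + (A * Real.tanh ξ) • mcross (f v) (deriv f v)) v := by
    have := (h1.const_smul A).add (h2.const_smul (A * Real.tanh ξ))
    refine HasDerivAt.congr_of_eventuallyEq this ?_
    filter_upwards with w
    rw [hγ w]
    rfl
  rw [hγd.deriv]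
  have hcosh : Real.cosh ξ ≠ 0 := (Real.cosh_pos ξ).ne'
  have hAt : A * Real.tanh ξ = u * Real.cosh θ * Real.sinh ξ := by
    rw [hA, Real.tanh_eq_sinh_div_cosh]
    field_simp
  rw [hAt, hA, smul_add, smul_smul, smul_smul]
end
end
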